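/- Let ξ be a nonnegative random variable, C₁, c, ε₀ > 0 with P(ξ ≤ ε) ≤ C₁ e^{-c(ln ε)²} for all 0 < ε ≤ ε₀. Fix κ > 0 and t₀ > e such that (ln t)^{2+κ} ≤ ε₀ t for all t ≥ t₀. Then for all t ≥ t₀: E[e^{-tξ}] ≤ C₁ e^{-c(ln t - (2+κ) ln ln t)²} + e^{-(ln t)^{2+κ}}. -/

import Mathlib

/-!
Split the expectation according to whether `ξ ≤ ε` with `ε = (ln t)^(2+κ) / t`: on that event
`e^{-tξ} ≤ 1`, and off it `e^{-tξ} ≤ e^{-tε} = e^{-(ln t)^(2+κ)}`. The small-ball hypothesis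
applies to `ε ≤ ε₀`, and `ln ε = -(ln t - (2+κ) ln ln t)`.
-/

open Real MeasureTheory

lemma exp_neg_mul_le_indicator_add {t x : ℝ} (ht : 0 ≤ t) (hx : 0 ≤ x) (ε : ℝ) :
    exp (-(t * x)) ≤ (Set.Iic ε).indicator 1 x + exp (-(t * ε)) := by
  by_cases hxε : x ≤ ε
  · rw [Set.indicator_of_mem (Set.mem_Iic.mpr hxε), Pi.one_apply]
    have : exp (-(t * x)) ≤ 1 := exp_le_one_iff.mpr (by nlinarith)
    linarith [exp_pos (-(t * ε))]
  · rw [Set.indicator_of_notMem (mt Set.mem_Iic.mp hxε), zero_add]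
    exact exp_le_exp.mpr (by nlinarith)

lemma integral_exp_neg_mul_le_measure_add {Ω : Type*} [MeasurableSpace Ω] (μ : Measure Ω)
    [IsProbabilityMeasure μ] {X : Ω → ℝ} (hX : Measurable X) (hX_nonneg : ∀ ω, 0 ≤ X ω)
    {t : ℝ} (ht : 0 ≤ t) (ε : ℝ) :
    ∫ ω, exp (-(t * X ω)) ∂μ ≤ μ.real {ω | X ω ≤ ε} + exp (-(t * ε)) := by
  have hS : MeasurableSet {ω | X ω ≤ ε} := hX measurableSet_Iic
  have h_ind : Integrable ({ω | X ω ≤ ε}.indicator (1 : Ω → ℝ)) μ :=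
    (integrable_const 1).indicator hS
  have h_exp : Integrable (fun ω ↦ exp (-(t * X ω))) μ := by
    refine (integrable_const (1 : ℝ)).mono' (hX.const_mul t).neg.exp.aestronglyMeasurable ?_
    refine ae_of_all _ fun ω ↦ ?_
    rw [norm_of_nonneg (exp_pos _).le, exp_le_one_iff, neg_nonpos]
    exact mul_nonneg ht (hX_nonneg ω)
  calc ∫ ω, exp (-(t * X ω)) ∂μ
      ≤ ∫ ω, ({ω | X ω ≤ ε}.indicator 1 ω + exp (-(t * ε))) ∂μ :=
        integral_mono h_exp (h_ind.add (integrable_const _)) fun ω ↦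
          exp_neg_mul_le_indicator_add ht (hX_nonneg ω) ε
    _ = μ.real {ω | X ω ≤ ε} + exp (-(t * ε)) := by
        rw [integral_add h_ind (integrable_const _), integral_indicator_one hS, integral_const,
          probReal_univ, one_smul]

lemma log_rpow_log_div_self {t : ℝ} (ht : 1 < t) (p : ℝ) :
    log (log t ^ p / t) = -(log t - p * log (log t)) := by
  have hlog : 0 < log t := log_pos ht
  rw [log_div (rpow_pos_of_pos hlog p).ne' (by linarith), log_rpow hlog]
  ring

theorem stmt_7_general {Ω : Type*} [MeasureSpace Ω] (μ : Measure Ω) [IsProbabilityMeasure μ]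
    (ξ : Ω → ℝ) (hmeas : Measurable ξ) (hnonneg : ∀ ω, 0 ≤ ξ ω)
    (C₁ c ε₀ κ t₀ : ℝ)
    (ht₀ : Real.exp 1 < t₀)
    (hup : ∀ ε : ℝ, 0 < ε → ε ≤ ε₀ →
      (μ {ω | ξ ω ≤ ε}).toReal ≤ C₁ * Real.exp (-c * (Real.log ε) ^ 2))
    (hlog : ∀ t : ℝ, t₀ ≤ t → (Real.log t) ^ (2 + κ) ≤ ε₀ * t) :
    ∀ t : ℝ, t₀ ≤ t →
      ∫ ω, Real.exp (-(t * ξ ω)) ∂μ ≤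
        C₁ * Real.exp (-c * (Real.log t - (2 + κ) * Real.log (Real.log t)) ^ 2) +
          Real.exp (-(Real.log t) ^ (2 + κ)) := by
  intro t ht
  have ht_pos : 0 < t := (exp_pos 1).trans (ht₀.trans_le ht)
  have ht_one : 1 < t := (one_lt_exp_iff.mpr one_pos).trans (ht₀.trans_le ht)
  set ε := log t ^ (2 + κ) / t
  have hε_pos : 0 < ε := div_pos (rpow_pos_of_pos (log_pos ht_one) _) ht_pos
  have hε_le : ε ≤ ε₀ := (div_le_iff₀ ht_pos).mpr (hlog t ht)
  have htε : t * ε = log t ^ (2 + κ) := mul_div_cancel₀ _ ht_pos.ne'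
  have h_small := hup ε hε_pos hε_le
  rw [log_rpow_log_div_self ht_one, neg_sq] at h_small
  calc ∫ ω, exp (-(t * ξ ω)) ∂μ ≤ μ.real {ω | ξ ω ≤ ε} + exp (-(t * ε)) :=
        integral_exp_neg_mul_le_measure_add μ hmeas hnonneg ht_pos.le ε
    _ ≤ _ := by rw [htε]; exact add_le_add h_small le_rfl

theorem stmt_7 {Ω : Type*} [MeasureSpace Ω] (μ : Measure Ω) [IsProbabilityMeasure μ]
    (ξ : Ω → ℝ) (hmeas : Measurable ξ) (hnonneg : ∀ ω, 0 ≤ ξ ω)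
    (C₁ c ε₀ κ t₀ : ℝ) (hC₁ : 0 < C₁) (hc : 0 < c) (hε₀ : 0 < ε₀) (hκ : 0 < κ)
    (ht₀ : Real.exp 1 < t₀)
    (hup : ∀ ε : ℝ, 0 < ε → ε ≤ ε₀ →
      (μ {ω | ξ ω ≤ ε}).toReal ≤ C₁ * Real.exp (-c * (Real.log ε) ^ 2))
    (hlog : ∀ t : ℝ, t₀ ≤ t → (Real.log t) ^ (2 + κ) ≤ ε₀ * t) :
    ∀ t : ℝ, t₀ ≤ t →
      ∫ ω, Real.exp (-(t * ξ ω)) ∂μ ≤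
        C₁ * Real.exp (-c * (Real.log t - (2 + κ) * Real.log (Real.log t)) ^ 2) +
          Real.exp (-(Real.log t) ^ (2 + κ)) :=
  stmt_7_general μ ξ hmeas hnonneg C₁ c ε₀ κ t₀ ht₀ hup hlog
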